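/- Let n ≥ 1, let T be an n×n real matrix, p⁰ ∈ ℝⁿ, N ≥ 1, λ > 0 and ω > 0, and define the trajectory-regularized objective L[h] = (1/N) · Σ_{t=0}^{N−1} (p⁰Tᵗ · ((T − I)h)) − (λ/(2N)) · Σ_{t=0}^{N−1} (p⁰Tᵗ · ((T − I)h))² − (λω/(2N)) · ‖h‖². Then L is strictly concave on ℝⁿ, and a vector h ∈ ℝⁿ is the unique global maximizer of L if and only if it satisfies the stationarity equation λ · [ Σ_{t=0}^{N−1} (p⁰(Tᵗ⁺¹ − Tᵗ) · h) · p⁰(Tᵗ⁺¹ − Tᵗ) + ω h ] = p⁰ Tᴺ − p⁰. -/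

import Mathlib

open Finset Matrix

/-!
Writing `a_t = p⁰Tᵗ⁺¹ − p⁰Tᵗ`, one has `p⁰Tᵗ · ((T − I)h) = a_t · h` and `Σ_t a_t = p⁰Tᴺ − p⁰`
telescopes, so `L h = ℓ h − B(h, h)/2` with `ℓ = (p⁰Tᴺ − p⁰)/N` and the Gram form
`B(x, y) = (λ/N)(Σ_t (a_t·x)(a_t·y) + ω x·y)`, which is positive definite because `ω > 0`.
For such a quadratic objective the exact expansion
`f(x + s v) = f x + s (ℓ v − B(x, v)) − s² B(v, v)/2`
gives strict concavity, and shows that `x` is the unique maximizer iff `ℓ = B(x, ·)`: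
otherwise the step `s = (ℓ v − B(x, v)) / B(v, v)` strictly increases `f`.
-/

section QuadraticObjective

variable {E : Type*} [AddCommGroup E] [Module ℝ E]

noncomputable def quadObjective (ℓ : E →ₗ[ℝ] ℝ) (B : LinearMap.BilinForm ℝ E) (x : E) : ℝ :=
  ℓ x - B x x / 2

variable {ℓ : E →ₗ[ℝ] ℝ} {B : LinearMap.BilinForm ℝ E}

lemma quadObjective_add_smul (hB : B.IsSymm) (x v : E) (s : ℝ) :
    quadObjective ℓ B (x + s • v) =
      quadObjective ℓ B x + s * (ℓ v - B x v) - s ^ 2 * B v v / 2 := by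
  simp only [quadObjective, map_add, map_smul, LinearMap.add_apply, LinearMap.smul_apply,
    smul_eq_mul, hB.eq v x]
  ring

lemma strictConcaveOn_quadObjective (hB : B.IsSymm) (hpos : ∀ x ≠ 0, 0 < B x x) :
    StrictConcaveOn ℝ Set.univ (quadObjective ℓ B) := by
  refine ⟨convex_univ, fun x _ y _ hxy s t hs ht hst => ?_⟩
  obtain rfl : t = 1 - s := by linarith
  have hx : x = y + (1 : ℝ) • (x - y) := by module
  have hz : s • x + (1 - s) • y = y + s • (x - y) := by module
  have hq := hpos (x - y) (sub_ne_zero.mpr hxy)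
  rw [hz, quadObjective_add_smul hB, hx, quadObjective_add_smul hB, ← hx, smul_eq_mul,
    smul_eq_mul]
  nlinarith [mul_pos (mul_pos hs ht) hq]

theorem forall_quadObjective_lt_iff (hB : B.IsSymm) (hpos : ∀ x ≠ 0, 0 < B x x) (x : E) :
    (∀ y ≠ x, quadObjective ℓ B y < quadObjective ℓ B x) ↔ ∀ v, ℓ v = B x v := by
  constructor
  · intro hmax v
    by_contra hne
    have hv : v ≠ 0 := by rintro rfl; simp at hne
    have hq := hpos v hv
    set c := ℓ v - B x v
    have hc : c ≠ 0 := sub_ne_zero.mpr hne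
    have hstep : x + (c / B v v) • v ≠ x := by
      simpa using And.intro (div_ne_zero hc hq.ne') hv
    have hlt := hmax _ hstep
    rw [quadObjective_add_smul hB] at hlt
    have hgain : c / B v v * c - (c / B v v) ^ 2 * B v v / 2 = c ^ 2 / (2 * B v v) := by
      field_simp; ring
    have : 0 < c ^ 2 / (2 * B v v) := by positivity
    linarith
  · intro hstat y hy
    have hexp := quadObjective_add_smul (ℓ := ℓ) hB x (y - x) 1
    rw [one_smul, add_sub_cancel, hstat, sub_self] at hexp
    have := hpos (y - x) (sub_ne_zero.mpr hy)
    linarith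

end QuadraticObjective

section GramMap

variable {ι m : Type*} [Fintype m]

noncomputable def gramMap (s : Finset ι) (a : ι → m → ℝ) (ω : ℝ) : (m → ℝ) →ₗ[ℝ] m → ℝ :=
  ∑ t ∈ s, (dotProductBilin ℝ ℝ (a t)).smulRight (a t) + ω • LinearMap.id

lemma gramMap_apply (s : Finset ι) (a : ι → m → ℝ) (ω : ℝ) (x : m → ℝ) :
    gramMap s a ω x = ∑ t ∈ s, (a t ⬝ᵥ x) • a t + ω • x := by
  simp [gramMap]

lemma gramMap_dotProduct (s : Finset ι) (a : ι → m → ℝ) (ω : ℝ) (x y : m → ℝ) :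
    gramMap s a ω x ⬝ᵥ y = ∑ t ∈ s, (a t ⬝ᵥ x) * (a t ⬝ᵥ y) + ω * (x ⬝ᵥ y) := by
  simp [gramMap_apply, sum_dotProduct]

lemma gramMap_dotProduct_comm (s : Finset ι) (a : ι → m → ℝ) (ω : ℝ) (x y : m → ℝ) :
    gramMap s a ω x ⬝ᵥ y = gramMap s a ω y ⬝ᵥ x := by
  simp only [gramMap_dotProduct, dotProduct_comm x y, mul_comm]

lemma gramMap_dotProduct_self_pos (s : Finset ι) (a : ι → m → ℝ) {ω : ℝ} (hω : 0 < ω)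
    {x : m → ℝ} (hx : x ≠ 0) : 0 < gramMap s a ω x ⬝ᵥ x := by
  rw [gramMap_dotProduct]
  have hxx : 0 < x ⬝ᵥ x := by simpa using dotProduct_self_star_pos_iff.mpr hx
  have := Finset.sum_nonneg fun t (_ : t ∈ s) => mul_self_nonneg (a t ⬝ᵥ x)
  positivity

end GramMap

section Trajectory

variable {m : Type*} [Fintype m] [DecidableEq m]

lemma vecMul_pow_dotProduct_sub_one_mulVec (p : m → ℝ) (T : Matrix m m ℝ) (t : ℕ)
    (h : m → ℝ) : (p ᵥ* T ^ t) ⬝ᵥ ((T - 1) *ᵥ h) = (p ᵥ* T ^ (t + 1) - p ᵥ* T ^ t) ⬝ᵥ h := by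
  rw [dotProduct_mulVec, vecMul_sub, vecMul_one, vecMul_vecMul, pow_succ]

lemma sum_range_vecMul_pow_succ_sub (p : m → ℝ) (T : Matrix m m ℝ) (N : ℕ) :
    ∑ t ∈ range N, (p ᵥ* T ^ (t + 1) - p ᵥ* T ^ t) = p ᵥ* T ^ N - p := by
  rw [sum_range_sub (fun t => p ᵥ* T ^ t), pow_zero, vecMul_one]

lemma trajectoryObjective_eq_quadObjective (p : m → ℝ) (T : Matrix m m ℝ) (N : ℕ)
    (lam ω : ℝ) (h : m → ℝ) :
    (1 / N) * ∑ t ∈ range N, ((p ᵥ* T ^ t) ⬝ᵥ ((T - 1) *ᵥ h))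
        - (lam / (2 * N)) * ∑ t ∈ range N, ((p ᵥ* T ^ t) ⬝ᵥ ((T - 1) *ᵥ h)) ^ 2
        - (lam * ω / (2 * N)) * ∑ i, (h i) ^ 2 =
      quadObjective (dotProductBilin ℝ ℝ ((N : ℝ)⁻¹ • (p ᵥ* T ^ N - p)))
        (dotProductBilin ℝ ℝ ∘ₗ
          ((lam / N) • gramMap (range N) (fun t => p ᵥ* T ^ (t + 1) - p ᵥ* T ^ t) ω)) h := by
  have hsq : ∑ i, h i ^ 2 = h ⬝ᵥ h := by simp only [dotProduct, sq]
  rw [hsq]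
  simp only [quadObjective, vecMul_pow_dotProduct_sub_one_mulVec, ← sum_dotProduct,
    sum_range_vecMul_pow_succ_sub, LinearMap.comp_apply, dotProductBilin_apply_apply,
    LinearMap.smul_apply, smul_dotProduct, gramMap_dotProduct, smul_eq_mul, sq]
  ring

end Trajectory

theorem stmt_8_general (n : ℕ) (T : Matrix (Fin n) (Fin n) ℝ) (p0 : Fin n → ℝ)
    (N : ℕ) (hN : 1 ≤ N) (lam ω : ℝ) (hlam : 0 < lam) (hω : 0 < ω)
    (L : (Fin n → ℝ) → ℝ)
    (hL : ∀ h : Fin n → ℝ,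
      L h = (1 / N) * ∑ t ∈ Finset.range N,
              ((p0 ᵥ* T ^ t) ⬝ᵥ ((T - 1) *ᵥ h))
            - (lam / (2 * N)) * ∑ t ∈ Finset.range N,
              ((p0 ᵥ* T ^ t) ⬝ᵥ ((T - 1) *ᵥ h)) ^ 2
            - (lam * ω / (2 * N)) * ∑ i, (h i) ^ 2) :
    StrictConcaveOn ℝ Set.univ L ∧
    (∀ h : Fin n → ℝ,
      (∀ g : Fin n → ℝ, g ≠ h → L g < L h) ↔
      lam • (∑ t ∈ Finset.range N,
              (((p0 ᵥ* T ^ (t + 1) - p0 ᵥ* T ^ t) ⬝ᵥ h) •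
                (p0 ᵥ* T ^ (t + 1) - p0 ᵥ* T ^ t))
            + ω • h)
        = p0 ᵥ* T ^ N - p0) := by
  set a : ℕ → Fin n → ℝ := fun t => p0 ᵥ* T ^ (t + 1) - p0 ᵥ* T ^ t
  set G := (lam / N) • gramMap (range N) a ω
  have hNpos : (0 : ℝ) < N := by exact_mod_cast hN
  have hB : LinearMap.BilinForm.IsSymm (dotProductBilin ℝ ℝ ∘ₗ G) := ⟨fun x y => by
    simp only [LinearMap.comp_apply, dotProductBilin_apply_apply, G, LinearMap.smul_apply,
      smul_dotProduct, gramMap_dotProduct_comm _ _ _ x]⟩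
  have hpos : ∀ x ≠ 0, 0 < G x ⬝ᵥ x := fun x hx => by
    simpa [G] using mul_pos (div_pos hlam hNpos) (gramMap_dotProduct_self_pos _ _ hω hx)
  have hLq : L = quadObjective (dotProductBilin ℝ ℝ ((N : ℝ)⁻¹ • (p0 ᵥ* T ^ N - p0)))
      (dotProductBilin ℝ ℝ ∘ₗ G) :=
    funext fun h => (hL h).trans (trajectoryObjective_eq_quadObjective p0 T N lam ω h)
  refine ⟨hLq ▸ strictConcaveOn_quadObjective hB hpos, fun h => ?_⟩
  rw [hLq, forall_quadObjective_lt_iff hB hpos]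
  have hG : G h = (N : ℝ)⁻¹ • lam • gramMap (range N) a ω h := by
    rw [smul_smul, inv_mul_eq_div]; rfl
  simp only [LinearMap.comp_apply, dotProductBilin_apply_apply, dotProduct_eq_iff, hG,
    smul_right_inj (inv_ne_zero hNpos.ne'), gramMap_apply, eq_comm, a]

/-- For `ω > 0` the trajectory-regularized objective is strictly concave, and `h` is
its unique global maximizer iff `h` satisfies the stationarity equation
`λ·[Σ_t (p⁰(Tᵗ⁺¹−Tᵗ)·h)·p⁰(Tᵗ⁺¹−Tᵗ) + ω h] = p⁰Tᴺ − p⁰`. -/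
theorem stmt_8 (n : ℕ) (hn : 1 ≤ n) (T : Matrix (Fin n) (Fin n) ℝ) (p0 : Fin n → ℝ)
    (N : ℕ) (hN : 1 ≤ N) (lam ω : ℝ) (hlam : 0 < lam) (hω : 0 < ω)
    (L : (Fin n → ℝ) → ℝ)
    (hL : ∀ h : Fin n → ℝ,
      L h = (1 / N) * ∑ t ∈ Finset.range N,
              ((p0 ᵥ* T ^ t) ⬝ᵥ ((T - 1) *ᵥ h))
            - (lam / (2 * N)) * ∑ t ∈ Finset.range N,
              ((p0 ᵥ* T ^ t) ⬝ᵥ ((T - 1) *ᵥ h)) ^ 2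
            - (lam * ω / (2 * N)) * ∑ i, (h i) ^ 2) :
    StrictConcaveOn ℝ Set.univ L ∧
    (∀ h : Fin n → ℝ,
      (∀ g : Fin n → ℝ, g ≠ h → L g < L h) ↔
      lam • (∑ t ∈ Finset.range N,
              (((p0 ᵥ* T ^ (t + 1) - p0 ᵥ* T ^ t) ⬝ᵥ h) •
                (p0 ᵥ* T ^ (t + 1) - p0 ᵥ* T ^ t))
            + ω • h)
        = p0 ᵥ* T ^ N - p0) :=
  stmt_8_general n T p0 N hN lam ω hlam hω L hL
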